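/- Limits of the Wigderson-Wigderson functional along the family g_c: for c > 0 let g_c(x) = c^(−1/2) exp(−π x²/c²) + c^(1/2) exp(−π c² x²) ∈ 𝓢(ℝ); then 𝓕 g_c = g_c, and for reals 1 < p < q < ∞: if 1/p + 1/q < 1 then ‖g_c‖_q ‖𝓕g_c‖_q / (‖g_c‖_p ‖𝓕g_c‖_p) → ∞ as c → ∞, while if 1/p + 1/q > 1 then ‖g_c‖_q ‖𝓕g_c‖_q / (‖g_c‖_p ‖𝓕g_c‖_p) → 0 as c → ∞. -/

import Mathlib

open MeasureTheory SchwartzMap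

/-- The `L^r` norm of `f : ℝ → ℂ` with respect to Lebesgue measure. -/
noncomputable def Lnorm (r : ℝ) (f : ℝ → ℂ) : ℝ :=
  (∫ x : ℝ, ‖f x‖ ^ r) ^ (1 / r)

/-- The sup norm `‖f‖_∞ = sup_x |f x|`. -/
noncomputable def Lsup (f : ℝ → ℂ) : ℝ := ⨆ x : ℝ, ‖f x‖

/-- The Fourier transform `𝓕 f (ξ) = ∫ f x · e^{-2πi x ξ} dx`. -/
noncomputable def FT (f : ℝ → ℂ) : ℝ → ℂ := fun ξ =>
  ∫ x : ℝ, f x * Complex.exp (-2 * Real.pi * Complex.I * x * ξ)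

/-- The self-dual Gaussian family
`g_c(x) = c^(-1/2) exp(-π x²/c²) + c^(1/2) exp(-π c² x²)`. -/
noncomputable def gfam (c : ℝ) : ℝ → ℂ := fun x =>
  ((c ^ (-(1 / 2) : ℝ) * Real.exp (-Real.pi * x ^ 2 / c ^ 2)
    + c ^ ((1 / 2) : ℝ) * Real.exp (-Real.pi * c ^ 2 * x ^ 2) : ℝ) : ℂ)

/-!
Writing `G_s(x) = s^(-1/2) exp(-π (x/s)²)`, we have `g_c = G_c + G_{1/c}` and `𝓕 G_s = G_{1/s}`,
so `g_c` is self-dual. Since `(a + b)^r` is comparable to `a^r + b^r` for `a, b ≥ 0`,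
`∫ g_c^r ≍ ∫ G_c^r + ∫ G_{1/c}^r = (c^(1-r/2) + c^(r/2-1)) / √r ≍ c^|1-r/2|`, i.e.
`‖g_c‖_r ≍ c^|1/2-1/r|` as `c → ∞`. The functional is therefore `≍ c^(2(|1/2-1/q| - |1/2-1/p|))`,
and for `p < q` the exponent has the sign of `1 - 1/p - 1/q`.
-/

open Real Filter Asymptotics FourierTransform

lemma Real.add_rpow_le_two_rpow_mul_rpow_add_rpow {a b r : ℝ} (ha : 0 ≤ a) (hb : 0 ≤ b)
    (hr : 0 ≤ r) : (a + b) ^ r ≤ 2 ^ r * (a ^ r + b ^ r) := by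
  wlog hab : b ≤ a generalizing a b
  · rw [add_comm a, add_comm (a ^ r)]
    exact this hb ha (le_of_not_ge hab)
  calc (a + b) ^ r ≤ (2 * a) ^ r := by gcongr; linarith
    _ = 2 ^ r * a ^ r := Real.mul_rpow zero_le_two ha
    _ ≤ 2 ^ r * (a ^ r + b ^ r) := by gcongr; exact le_add_of_nonneg_right (by positivity)

section IntegralRpowAdd

variable {α : Type*} [MeasurableSpace α] {μ : Measure α} {f g : α → ℝ} {r : ℝ}

lemma integrable_add_rpow (hr : 0 ≤ r) (hf : ∀ x, 0 ≤ f x) (hg : ∀ x, 0 ≤ g x)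
    (hfm : AEMeasurable f μ) (hgm : AEMeasurable g μ)
    (hfi : Integrable (fun x => f x ^ r) μ) (hgi : Integrable (fun x => g x ^ r) μ) :
    Integrable (fun x => (f x + g x) ^ r) μ := by
  refine ((hfi.add hgi).const_mul (2 ^ r)).mono' ((hfm.add hgm).pow_const r).aestronglyMeasurable
    (ae_of_all _ fun x => ?_)
  rw [Real.norm_of_nonneg (by have := hf x; have := hg x; positivity)]
  exact Real.add_rpow_le_two_rpow_mul_rpow_add_rpow (hf x) (hg x) hr

lemma integral_add_rpow_le (hr : 0 ≤ r) (hf : ∀ x, 0 ≤ f x) (hg : ∀ x, 0 ≤ g x)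
    (hfm : AEMeasurable f μ) (hgm : AEMeasurable g μ)
    (hfi : Integrable (fun x => f x ^ r) μ) (hgi : Integrable (fun x => g x ^ r) μ) :
    ∫ x, (f x + g x) ^ r ∂μ ≤ 2 ^ r * (∫ x, f x ^ r ∂μ + ∫ x, g x ^ r ∂μ) := by
  rw [← integral_add hfi hgi, ← integral_const_mul]
  exact integral_mono (integrable_add_rpow hr hf hg hfm hgm hfi hgi)
    ((hfi.add hgi).const_mul _)
    fun x => Real.add_rpow_le_two_rpow_mul_rpow_add_rpow (hf x) (hg x) hr

lemma integral_rpow_le_integral_add_rpow (hr : 0 ≤ r) (hf : ∀ x, 0 ≤ f x) (hg : ∀ x, 0 ≤ g x)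
    (hi : Integrable (fun x => (f x + g x) ^ r) μ) :
    ∫ x, f x ^ r ∂μ ≤ ∫ x, (f x + g x) ^ r ∂μ :=
  integral_mono_of_nonneg (ae_of_all _ fun x => by have := hf x; positivity) hi
    (ae_of_all _ fun x => Real.rpow_le_rpow (hf x) (le_add_of_nonneg_right (hg x)) hr)

lemma integral_rpow_add_integral_rpow_le (hr : 0 ≤ r) (hf : ∀ x, 0 ≤ f x) (hg : ∀ x, 0 ≤ g x)
    (hi : Integrable (fun x => (f x + g x) ^ r) μ) :
    ∫ x, f x ^ r ∂μ + ∫ x, g x ^ r ∂μ ≤ 2 * ∫ x, (f x + g x) ^ r ∂μ := by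
  have hf' := integral_rpow_le_integral_add_rpow hr hf hg hi
  have hg' := integral_rpow_le_integral_add_rpow hr hg hf (by simpa only [add_comm] using hi)
  simp only [add_comm (g _)] at hg'
  linarith

end IntegralRpowAdd

lemma rpow_abs_eq_max {c : ℝ} (hc : 1 ≤ c) (s : ℝ) : c ^ |s| = max (c ^ s) (c ^ (-s)) := by
  rcases le_total 0 s with hs | hs
  · rw [abs_of_nonneg hs, max_eq_left (Real.rpow_le_rpow_of_exponent_le hc (by linarith))]
  · rw [abs_of_nonpos hs, max_eq_right (Real.rpow_le_rpow_of_exponent_le hc (by linarith))]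

lemma rpow_add_rpow_neg_isTheta (s : ℝ) :
    (fun c : ℝ => c ^ s + c ^ (-s)) =Θ[atTop] fun c => c ^ |s| := by
  have hbounds : ∀ᶠ c : ℝ in atTop,
      c ^ |s| ≤ c ^ s + c ^ (-s) ∧ c ^ s + c ^ (-s) ≤ 2 * c ^ |s| := by
    filter_upwards [eventually_ge_atTop 1] with c hc
    have hc0 : 0 ≤ c := by linarith
    rw [rpow_abs_eq_max hc]
    have := Real.rpow_nonneg hc0 s
    have := Real.rpow_nonneg hc0 (-s)
    constructor
    · exact max_le_add_of_nonneg ‹_› ‹_›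
    · rw [two_mul]; exact add_le_add (le_max_left _ _) (le_max_right _ _)
  refine ⟨.of_bound 2 ?_, .of_bound 1 ?_⟩ <;>
  filter_upwards [hbounds, eventually_ge_atTop 0] with c hc hc0 <;>
  rw [Real.norm_of_nonneg (by positivity), Real.norm_of_nonneg (by positivity)] <;> linarith

lemma FT_eq_fourier (f : ℝ → ℂ) : FT f = 𝓕 f := by
  ext ξ
  rw [FT, Real.fourier_real_eq_integral_exp_smul]
  congr 1 with x
  rw [smul_eq_mul, mul_comm]
  push_cast
  ring_nf

lemma FT_const_smul (r : ℂ) (f : ℝ → ℂ) : FT (r • f) = r • FT f := by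
  simp only [FT_eq_fourier]
  exact VectorFourier.fourierIntegral_const_smul _ _ _ _ _

lemma FT_add {f g : ℝ → ℂ} (hf : Integrable f) (hg : Integrable g) :
    FT (f + g) = FT f + FT g := by
  simp only [FT_eq_fourier]
  exact VectorFourier.fourierIntegral_add Real.continuous_fourierChar
    continuous_inner hf hg

noncomputable def dilatedGaussian (s x : ℝ) : ℝ := s ^ (-(1 / 2) : ℝ) * exp (-π * (x / s) ^ 2)

section DilatedGaussian

variable {s : ℝ}

lemma dilatedGaussian_nonneg (hs : 0 < s) (x : ℝ) : 0 ≤ dilatedGaussian s x := by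
  unfold dilatedGaussian; positivity

lemma continuous_dilatedGaussian : Continuous (dilatedGaussian s) := by
  unfold dilatedGaussian; fun_prop

lemma dilatedGaussian_rpow (hs : 0 < s) (r x : ℝ) :
    dilatedGaussian s x ^ r = s ^ (-r / 2) * exp (-(π * r / s ^ 2) * x ^ 2) := by
  rw [dilatedGaussian, Real.mul_rpow (by positivity) (exp_pos _).le, ← Real.rpow_mul hs.le,
    ← Real.exp_mul]
  congr 2 <;> field_simp

lemma integrable_dilatedGaussian_rpow (hs : 0 < s) {r : ℝ} (hr : 0 < r) :
    Integrable fun x => dilatedGaussian s x ^ r := by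
  simp only [dilatedGaussian_rpow hs]
  exact (integrable_exp_neg_mul_sq (by positivity)).const_mul _

lemma integral_dilatedGaussian_rpow (hs : 0 < s) {r : ℝ} (hr : 0 < r) :
    ∫ x, dilatedGaussian s x ^ r = s ^ (1 - r / 2) / √r := by
  simp only [dilatedGaussian_rpow hs]
  rw [integral_const_mul, integral_gaussian,
    show π / (π * r / s ^ 2) = s ^ 2 / r by field_simp, Real.sqrt_div' _ hr.le,
    Real.sqrt_sq hs.le, sub_eq_neg_add, Real.rpow_add hs, Real.rpow_one, mul_div_assoc, neg_div]

lemma integrable_dilatedGaussian (hs : 0 < s) : Integrable fun x => (dilatedGaussian s x : ℂ) := by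
  simpa using (integrable_dilatedGaussian_rpow hs one_pos).ofReal (𝕜 := ℂ)

lemma FT_dilatedGaussian (hs : 0 < s) :
    FT (fun x => (dilatedGaussian s x : ℂ)) = fun x => (dilatedGaussian s⁻¹ x : ℂ) := by
  have hb : 0 < (((s ^ 2)⁻¹ : ℝ) : ℂ).re := by rw [Complex.ofReal_re]; positivity
  have h : (fun x : ℝ => (dilatedGaussian s x : ℂ))
      = ((s ^ (-(1 / 2) : ℝ) : ℝ) : ℂ) •
        fun x : ℝ => Complex.exp (-π * ((s ^ 2)⁻¹ : ℝ) * x ^ 2) := by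
    ext x
    simp only [dilatedGaussian, Pi.smul_apply, smul_eq_mul]
    push_cast
    ring_nf
  rw [h, FT_const_smul, FT_eq_fourier, fourier_gaussian_pi hb]
  ext t
  simp only [dilatedGaussian, Pi.smul_apply, smul_eq_mul]
  have hsqrt : (((s ^ 2)⁻¹ : ℝ) : ℂ) ^ (1 / 2 : ℂ) = (s⁻¹ : ℝ) := by
    rw [show (1 / 2 : ℂ) = ((1 / 2 : ℝ) : ℂ) by norm_num, ← Complex.ofReal_cpow (by positivity),
      ← Real.sqrt_eq_rpow, Real.sqrt_inv, Real.sqrt_sq hs.le]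
  have hscale : s⁻¹ ^ (-(1 / 2) : ℝ) = s ^ (-(1 / 2) : ℝ) * s := by
    rw [Real.inv_rpow hs.le, ← Real.rpow_neg hs.le, neg_neg]
    conv_lhs => rw [show (1 / 2 : ℝ) = -(1 / 2) + 1 by norm_num, Real.rpow_add hs, Real.rpow_one]
  rw [hsqrt, hscale]
  push_cast
  field_simp

end DilatedGaussian

lemma gfam_eq_add {c : ℝ} (hc : 0 < c) :
    gfam c = (fun x => (dilatedGaussian c x : ℂ)) + fun x => (dilatedGaussian c⁻¹ x : ℂ) := by
  ext x
  simp only [gfam, dilatedGaussian, Pi.add_apply, Real.inv_rpow hc.le, ← Real.rpow_neg hc.le,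
    neg_neg]
  push_cast
  congr 3 <;> field_simp

lemma FT_gfam {c : ℝ} (hc : 0 < c) : FT (gfam c) = gfam c := by
  rw [gfam_eq_add hc, FT_add (integrable_dilatedGaussian hc)
    (integrable_dilatedGaussian (inv_pos.2 hc)), FT_dilatedGaussian hc,
    FT_dilatedGaussian (inv_pos.2 hc), inv_inv, add_comm]

lemma norm_gfam {c : ℝ} (hc : 0 < c) (x : ℝ) :
    ‖gfam c x‖ = dilatedGaussian c x + dilatedGaussian c⁻¹ x := by
  rw [gfam_eq_add hc, Pi.add_apply, ← Complex.ofReal_add, Complex.norm_real, Real.norm_of_nonneg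
    (add_nonneg (dilatedGaussian_nonneg hc x) (dilatedGaussian_nonneg (inv_pos.2 hc) x))]

lemma integral_norm_rpow_gfam_isTheta {r : ℝ} (hr : 0 < r) :
    (fun c => ∫ x, ‖gfam c x‖ ^ r) =Θ[atTop] fun c => c ^ |1 - r / 2| := by
  have hbounds : ∀ᶠ c : ℝ in atTop,
      (c ^ (1 - r / 2) + c ^ (-(1 - r / 2))) / √r ≤ 2 * ∫ x, ‖gfam c x‖ ^ r ∧
      ∫ x, ‖gfam c x‖ ^ r ≤ 2 ^ r * ((c ^ (1 - r / 2) + c ^ (-(1 - r / 2))) / √r) := by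
    filter_upwards [eventually_gt_atTop 0] with c hc
    have hc' := inv_pos.2 hc
    have hsum : (c ^ (1 - r / 2) + c ^ (-(1 - r / 2))) / √r
        = (∫ x, dilatedGaussian c x ^ r) + ∫ x, dilatedGaussian c⁻¹ x ^ r := by
      rw [integral_dilatedGaussian_rpow hc hr, integral_dilatedGaussian_rpow hc' hr,
        Real.inv_rpow hc.le, ← Real.rpow_neg hc.le, add_div]
    simp only [norm_gfam hc, hsum]
    have hf := dilatedGaussian_nonneg hc
    have hg := dilatedGaussian_nonneg hc'
    have hfm := (continuous_dilatedGaussian (s := c)).aemeasurable (μ := volume)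
    have hgm := (continuous_dilatedGaussian (s := c⁻¹)).aemeasurable (μ := volume)
    have hfi := integrable_dilatedGaussian_rpow hc hr
    have hgi := integrable_dilatedGaussian_rpow hc' hr
    exact ⟨integral_rpow_add_integral_rpow_le hr.le hf hg
        (integrable_add_rpow hr.le hf hg hfm hgm hfi hgi),
      integral_add_rpow_le hr.le hf hg hfm hgm hfi hgi⟩
  have hI : (fun c => ∫ x, ‖gfam c x‖ ^ r)
      =Θ[atTop] fun c => (c ^ (1 - r / 2) + c ^ (-(1 - r / 2))) / √r := by
    refine ⟨.of_bound (2 ^ r) ?_, .of_bound 2 ?_⟩ <;>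
    filter_upwards [hbounds, eventually_gt_atTop 0] with c hc hc0 <;>
    rw [Real.norm_of_nonneg (integral_nonneg fun x => by positivity),
      Real.norm_of_nonneg (by positivity)] <;> linarith
  refine hI.trans ?_
  simp only [div_eq_inv_mul]
  exact (isTheta_const_mul_left (by positivity)).2 (rpow_add_rpow_neg_isTheta _)

lemma Lnorm_nonneg (r : ℝ) (f : ℝ → ℂ) : 0 ≤ Lnorm r f :=
  Real.rpow_nonneg (integral_nonneg fun x => by positivity) _

lemma Lnorm_gfam_isTheta {r : ℝ} (hr : 0 < r) :
    (fun c => Lnorm r (gfam c)) =Θ[atTop] fun c => c ^ |1 / 2 - 1 / r| := by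
  have hexp : |1 - r / 2| * (1 / r) = |1 / 2 - 1 / r| := by
    rw [abs_sub_comm, ← abs_of_pos (one_div_pos.2 hr), ← abs_mul, abs_of_pos (one_div_pos.2 hr)]
    congr 1; field_simp
  refine ((integral_norm_rpow_gfam_isTheta hr).rpow
    (.of_forall fun c => integral_nonneg fun x => by positivity) ?_).trans_eventuallyEq ?_
  · filter_upwards [eventually_ge_atTop 0] with c hc using Real.rpow_nonneg hc _
  · filter_upwards [eventually_ge_atTop 0] with c hc
    rw [← Real.rpow_mul hc, hexp]

noncomputable def wwFunctional (p q : ℝ) (f : ℝ → ℂ) : ℝ :=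
  Lnorm q f * Lnorm q (FT f) / (Lnorm p f * Lnorm p (FT f))

lemma wwFunctional_nonneg (p q : ℝ) (f : ℝ → ℂ) : 0 ≤ wwFunctional p q f := by
  unfold wwFunctional
  have := Lnorm_nonneg p f; have := Lnorm_nonneg q f
  have := Lnorm_nonneg p (FT f); have := Lnorm_nonneg q (FT f)
  positivity

lemma wwFunctional_gfam_isTheta {p q : ℝ} (hp : 0 < p) (hq : 0 < q) :
    (fun c => wwFunctional p q (gfam c))
      =Θ[atTop] fun c => c ^ (2 * (|1 / 2 - 1 / q| - |1 / 2 - 1 / p|)) := by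
  have hself : (fun c => wwFunctional p q (gfam c))
      =ᶠ[atTop] fun c =>
        Lnorm q (gfam c) * Lnorm q (gfam c) / (Lnorm p (gfam c) * Lnorm p (gfam c)) := by
    filter_upwards [eventually_gt_atTop 0] with c hc
    rw [wwFunctional, FT_gfam hc]
  have hpow : (fun c : ℝ => c ^ |1 / 2 - 1 / q| * c ^ |1 / 2 - 1 / q|
        / (c ^ |1 / 2 - 1 / p| * c ^ |1 / 2 - 1 / p|))
      =ᶠ[atTop] fun c => c ^ (2 * (|1 / 2 - 1 / q| - |1 / 2 - 1 / p|)) := by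
    filter_upwards [eventually_gt_atTop 0] with c hc
    rw [← Real.rpow_add hc, ← Real.rpow_add hc, ← Real.rpow_sub hc]
    ring_nf
  have hq' := Lnorm_gfam_isTheta hq
  have hp' := Lnorm_gfam_isTheta hp
  exact hself.trans_isTheta (((hq'.mul hq').div (hp'.mul hp')).trans_eventuallyEq hpow)

lemma abs_half_sub_inv_lt_of_add_inv_lt_one {p q : ℝ} (hp : 0 < p) (hpq : p < q)
    (h : 1 / p + 1 / q < 1) : |1 / 2 - 1 / p| < |1 / 2 - 1 / q| := by
  have : 1 / q < 1 / p := one_div_lt_one_div_of_lt hp hpq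
  rw [abs_lt, abs_of_pos (by linarith)]
  constructor <;> linarith

lemma abs_half_sub_inv_lt_of_one_lt_add_inv {p q : ℝ} (hp : 0 < p) (hpq : p < q)
    (h : 1 < 1 / p + 1 / q) : |1 / 2 - 1 / q| < |1 / 2 - 1 / p| := by
  have : 1 / q < 1 / p := one_div_lt_one_div_of_lt hp hpq
  rw [abs_lt, abs_of_neg (by linarith)]
  constructor <;> linarith

/-- Limits of the Wigderson-Wigderson functional along the family `g_c` as `c → ∞`. -/
theorem WW_functional_gfam_limits (p q : ℝ) (hp : 1 < p) (hpq : p < q) :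
    (∀ c : ℝ, 0 < c → FT (gfam c) = gfam c) ∧
    (1 / p + 1 / q < 1 →
      Filter.Tendsto
        (fun c : ℝ => Lnorm q (gfam c) * Lnorm q (FT (gfam c))
          / (Lnorm p (gfam c) * Lnorm p (FT (gfam c))))
        Filter.atTop Filter.atTop) ∧
    (1 / p + 1 / q > 1 →
      Filter.Tendsto
        (fun c : ℝ => Lnorm q (gfam c) * Lnorm q (FT (gfam c))
          / (Lnorm p (gfam c) * Lnorm p (FT (gfam c))))
        Filter.atTop (nhds 0)) := by
  have hp0 : 0 < p := by linarith
  have hratio := wwFunctional_gfam_isTheta hp0 (hp0.trans hpq)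
  set α := 2 * (|1 / 2 - 1 / q| - |1 / 2 - 1 / p|) with hα
  refine ⟨fun c hc => FT_gfam hc, fun h => ?_, fun h => ?_⟩
  · have hα_pos : 0 < α := by linarith [abs_half_sub_inv_lt_of_add_inv_lt_one hp0 hpq h]
    have hpow : Tendsto (norm ∘ fun c : ℝ => c ^ α) atTop atTop :=
      (tendsto_rpow_atTop hα_pos).congr' <| by
        filter_upwards [eventually_ge_atTop 0] with c hc
        exact (Real.norm_of_nonneg (Real.rpow_nonneg hc _)).symm
    exact (hratio.tendsto_norm_atTop_iff.2 hpow).congr fun c =>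
      Real.norm_of_nonneg (wwFunctional_nonneg p q _)
  · have hα_neg : 0 < -α := by linarith [abs_half_sub_inv_lt_of_one_lt_add_inv hp0 hpq h]
    refine hratio.tendsto_zero_iff.2 ?_
    simpa only [neg_neg] using tendsto_rpow_neg_atTop hα_neg
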